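/- With the map φ as above, the gradient of the coordinate s₁ (as a function of the Cartesian point x = φ(s)) equals (1/(1 - ε κ s₃ R cos s₂)) T(s₁), provided 1 - ε κ s₃ R cos s₂ ≠ 0. -/

import Mathlib

open scoped RealInnerProductSpace

/-!
The derivatives `∂φ/∂s₂` and `∂φ/∂s₃` lie in the normal plane `span (N, B)`, hence are orthogonal
to `T`. By Frenet–Serret, `∂φ/∂s₁ = T + ε s₃ R (cos s₂ N' + sin s₂ B') + (normal terms)` with
`⟪T, N'⟫ = -κ` and `⟪T, B'⟫ = 0`, so `⟪T, ∂φ/∂s₁⟫ = 1 - ε κ s₃ R cos s₂`. Dividing by this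
factor gives the three relations.
-/

open Real

section Tube

variable {E : Type*} [NormedAddCommGroup E] [InnerProductSpace ℝ E]

theorem hasDerivAt_tube_arclength {c T N B : ℝ → E} {κ τ ρ : ℝ → ℝ} {ρ' θ s : ℝ}
    (hc : HasDerivAt c (T s) s) (hN : HasDerivAt N ((-κ s) • T s + τ s • B s) s)
    (hB : HasDerivAt B ((-τ s) • N s) s) (hρ : HasDerivAt ρ ρ' s) :
    HasDerivAt (fun s => c s + ρ s • (cos θ • N s + sin θ • B s))
      (T s + (ρ s • (cos θ • ((-κ s) • T s + τ s • B s) + sin θ • ((-τ s) • N s))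
        + ρ' • (cos θ • N s + sin θ • B s))) s :=
  hc.add (hρ.smul ((hN.const_smul _).add (hB.const_smul _)))

theorem hasDerivAt_tube_angle (p N B : E) (a θ : ℝ) :
    HasDerivAt (fun θ => p + a • (cos θ • N + sin θ • B))
      (a • ((-sin θ) • N + cos θ • B)) θ := by
  simpa using ((((hasDerivAt_cos θ).smul_const N).add
    ((hasDerivAt_sin θ).smul_const B)).const_smul a).const_add p

theorem hasDerivAt_tube_radius (p v : E) (ε ρ r : ℝ) :
    HasDerivAt (fun r => p + (ε * r * ρ) • v) ((ε * ρ) • v) r := by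
  simpa using ((((hasDerivAt_id r).const_mul ε).mul_const ρ).smul_const v).const_add p

variable {T N B : E}

theorem inner_tube_arclength_deriv (hTT : ⟪T, T⟫ = 1) (hTN : ⟪T, N⟫ = 0) (hTB : ⟪T, B⟫ = 0)
    (κ τ a b θ : ℝ) :
    ⟪T, T + (a • (cos θ • ((-κ) • T + τ • B) + sin θ • ((-τ) • N))
      + b • (cos θ • N + sin θ • B))⟫ = 1 - a * κ * cos θ := by
  simp only [inner_add_right, inner_smul_right, hTT, hTN, hTB]
  ring

theorem inner_normal_plane_eq_zero (hTN : ⟪T, N⟫ = 0) (hTB : ⟪T, B⟫ = 0) (α β : ℝ) :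
    ⟪T, α • N + β • B⟫ = 0 := by
  simp [inner_add_right, inner_smul_right, hTN, hTB]

end Tube

theorem stmt_2_general
    (c T N B : ℝ → EuclideanSpace ℝ (Fin 3)) (κ τ : ℝ → ℝ)
    (R : ℝ → ℝ → ℝ) (Rs : ℝ → ℝ) (ε t s₁ s₂ s₃ : ℝ)
    (hc : ∀ s, HasDerivAt c (T s) s)
    (hN : ∀ s, HasDerivAt N ((-κ s) • T s + τ s • B s) s)
    (hB : ∀ s, HasDerivAt B ((-τ s) • N s) s)
    (hTT : ∀ s, ⟪T s, T s⟫ = 1) (hTN : ∀ s, ⟪T s, N s⟫ = 0)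
    (hTB : ∀ s, ⟪T s, B s⟫ = 0)
    (hR : ∀ s, HasDerivAt (fun s' => R t s') (Rs s) s)
    (D : Fin 3 → EuclideanSpace ℝ (Fin 3))
    (hD1 : HasDerivAt
      (fun s => c s + (ε * s₃ * R t s) • ((Real.cos s₂) • N s + (Real.sin s₂) • B s))
      (D 0) s₁)
    (hD2 : HasDerivAt
      (fun θ => c s₁ + (ε * s₃ * R t s₁) • ((Real.cos θ) • N s₁ + (Real.sin θ) • B s₁))
      (D 1) s₂)
    (hD3 : HasDerivAt
      (fun r => c s₁ + (ε * r * R t s₁) • ((Real.cos s₂) • N s₁ + (Real.sin s₂) • B s₁))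
      (D 2) s₃)
    (hA : 1 - ε * κ s₁ * s₃ * R t s₁ * Real.cos s₂ ≠ 0) :
    ⟪(1 / (1 - ε * κ s₁ * s₃ * R t s₁ * Real.cos s₂)) • T s₁, D 0⟫ = 1 ∧
    ⟪(1 / (1 - ε * κ s₁ * s₃ * R t s₁ * Real.cos s₂)) • T s₁, D 1⟫ = 0 ∧
    ⟪(1 / (1 - ε * κ s₁ * s₃ * R t s₁ * Real.cos s₂)) • T s₁, D 2⟫ = 0 := by
  have hD0_eq := hD1.unique (hasDerivAt_tube_arclength (θ := s₂) (hc s₁) (hN s₁) (hB s₁)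
    ((hR s₁).const_mul (ε * s₃)))
  have hD1_eq := hD2.unique (hasDerivAt_tube_angle (c s₁) (N s₁) (B s₁) (ε * s₃ * R t s₁) s₂)
  have hD2_eq := hD3.unique (hasDerivAt_tube_radius (c s₁) _ ε (R t s₁) s₃)
  rw [hD0_eq, hD1_eq, hD2_eq]
  simp only [real_inner_smul_left, real_inner_smul_right,
    inner_tube_arclength_deriv (hTT s₁) (hTN s₁) (hTB s₁),
    inner_normal_plane_eq_zero (hTN s₁) (hTB s₁), mul_zero, and_true]
  field_simp

/-- The gradient of the coordinate `s₁` of the inverse of `φ`, namely the vector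
`G = (1/(1 - ε κ s₃ R cos s₂)) T(s₁)`, is characterized by the relations
`⟪G, ∂φ/∂s₁⟫ = 1`, `⟪G, ∂φ/∂s₂⟫ = 0`, `⟪G, ∂φ/∂s₃⟫ = 0` (the first row of the inverse
Jacobian `(∇ₛφ)⁻¹` in the Frenet basis), provided `1 - ε κ s₃ R cos s₂ ≠ 0`. -/
theorem stmt_2
    (c T N B : ℝ → EuclideanSpace ℝ (Fin 3)) (κ τ : ℝ → ℝ)
    (R : ℝ → ℝ → ℝ) (Rs : ℝ → ℝ) (ε t s₁ s₂ s₃ : ℝ)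
    (hc : ∀ s, HasDerivAt c (T s) s)
    (hT : ∀ s, HasDerivAt T (κ s • N s) s)
    (hN : ∀ s, HasDerivAt N ((-κ s) • T s + τ s • B s) s)
    (hB : ∀ s, HasDerivAt B ((-τ s) • N s) s)
    (hTT : ∀ s, ⟪T s, T s⟫ = 1) (hNN : ∀ s, ⟪N s, N s⟫ = 1)
    (hBB : ∀ s, ⟪B s, B s⟫ = 1) (hTN : ∀ s, ⟪T s, N s⟫ = 0)
    (hTB : ∀ s, ⟪T s, B s⟫ = 0) (hNB : ∀ s, ⟪N s, B s⟫ = 0)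
    (hRpos : ∀ s, 0 < R t s)
    (hR : ∀ s, HasDerivAt (fun s' => R t s') (Rs s) s)
    (D : Fin 3 → EuclideanSpace ℝ (Fin 3))
    (hD1 : HasDerivAt
      (fun s => c s + (ε * s₃ * R t s) • ((Real.cos s₂) • N s + (Real.sin s₂) • B s))
      (D 0) s₁)
    (hD2 : HasDerivAt
      (fun θ => c s₁ + (ε * s₃ * R t s₁) • ((Real.cos θ) • N s₁ + (Real.sin θ) • B s₁))
      (D 1) s₂)
    (hD3 : HasDerivAt
      (fun r => c s₁ + (ε * r * R t s₁) • ((Real.cos s₂) • N s₁ + (Real.sin s₂) • B s₁))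
      (D 2) s₃)
    (hA : 1 - ε * κ s₁ * s₃ * R t s₁ * Real.cos s₂ ≠ 0) :
    ⟪(1 / (1 - ε * κ s₁ * s₃ * R t s₁ * Real.cos s₂)) • T s₁, D 0⟫ = 1 ∧
    ⟪(1 / (1 - ε * κ s₁ * s₃ * R t s₁ * Real.cos s₂)) • T s₁, D 1⟫ = 0 ∧
    ⟪(1 / (1 - ε * κ s₁ * s₃ * R t s₁ * Real.cos s₂)) • T s₁, D 2⟫ = 0 :=
  stmt_2_general c T N B κ τ R Rs ε t s₁ s₂ s₃ hc hN hB hTT hTN hTB hR D hD1 hD2 hD3 hA
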